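/- Let n be a positive integer and let B be a real symmetric 2n×2n matrix such that J·B is semisimple (diagonalizable over ℂ). Let V ⊆ ℂ^{2n} be the kernel of B regarded as a complex matrix, and let G = i·J, a Hermitian matrix. Then the Hermitian form (x, y) ↦ x*·G·y restricted to V is nondegenerate and has signature zero, i.e., the maximal dimension of a subspace of V on which it is positive definite equals the maximal dimension of a subspace of V on which it is negative definite, and these two dimensions sum to dim V. -/

import Mathlib

open Matrix

noncomputable section

/-- The standard symplectic matrix `J = [[0, -Iₙ], [Iₙ, 0]]`. -/
def Jmat (n : ℕ) : Matrix (Fin n ⊕ Fin n) (Fin n ⊕ Fin n) ℝ :=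
  Matrix.fromBlocks 0 (-1) 1 0

/-- A real matrix regarded as a complex matrix. -/
def mapC {m : Type*} [Fintype m] [DecidableEq m] (M : Matrix m m ℝ) : Matrix m m ℂ :=
  M.map (algebraMap ℝ ℂ)

/-- `M` is spectrally stable if every complex eigenvalue of `M` is purely imaginary. -/
def spectrallyStable {m : Type*} [Fintype m] [DecidableEq m] (M : Matrix m m ℝ) : Prop :=
  ∀ z ∈ spectrum ℂ (mapC M), z.re = 0

/-- `M` is semisimple if it is diagonalizable over `ℂ`. -/
def semisimpleC {m : Type*} [Fintype m] [DecidableEq m] (M : Matrix m m ℝ) : Prop :=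
  ∃ P : Matrix m m ℂ, IsUnit P ∧ ∃ d : m → ℂ, mapC M = P * Matrix.diagonal d * P⁻¹

/-- The Morse index of a real symmetric matrix: the number of negative eigenvalues,
counted with multiplicity (as roots of the characteristic polynomial). -/
def morseIndex {m : Type*} [Fintype m] [DecidableEq m] (B : Matrix m m ℝ) : ℕ :=
  ((B.charpoly.roots).filter (fun x => x < 0)).card

/-- The nullity of a real matrix: the dimension of its kernel. -/
def nullity {m : Type*} [Fintype m] [DecidableEq m] (B : Matrix m m ℝ) : ℕ :=
  Module.finrank ℝ (LinearMap.ker B.mulVecLin)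

/-- Maximal dimension of a subspace of `V` on which the Hermitian form
`(x, y) ↦ x* G y` is positive definite. -/
def posIndexOn {m : Type*} [Fintype m] [DecidableEq m]
    (G : Matrix m m ℂ) (V : Submodule ℂ (m → ℂ)) : ℕ :=
  sSup {k : ℕ | ∃ U : Submodule ℂ (m → ℂ), U ≤ V ∧ Module.finrank ℂ U = k ∧
    ∀ x ∈ U, x ≠ 0 → 0 < (star x ⬝ᵥ G.mulVec x).re}

/-- Maximal dimension of a subspace of `V` on which the Hermitian form
`(x, y) ↦ x* G y` is negative definite. -/
def negIndexOn {m : Type*} [Fintype m] [DecidableEq m]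
    (G : Matrix m m ℂ) (V : Submodule ℂ (m → ℂ)) : ℕ :=
  sSup {k : ℕ | ∃ U : Submodule ℂ (m → ℂ), U ≤ V ∧ Module.finrank ℂ U = k ∧
    ∀ x ∈ U, x ≠ 0 → (star x ⬝ᵥ G.mulVec x).re < 0}


section Helpers

set_option linter.unusedSectionVars false
set_option maxHeartbeats 1000000

variable {m : Type*} [Fintype m] [DecidableEq m]

lemma herm_conj (G : Matrix m m ℂ) (hG : G.IsHermitian) (x y : m → ℂ) :
    star (star x ⬝ᵥ G.mulVec y) = star y ⬝ᵥ G.mulVec x := by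
  simp [dotProduct, mulVec, Finset.mul_sum, map_sum]
  rw [Finset.sum_comm]
  refine Finset.sum_congr rfl fun j _ => Finset.sum_congr rfl fun i _ => ?_
  have := congrFun (congrFun hG i) j
  simp only [conjTranspose_apply] at this
  rw [← this, RCLike.star_def, Complex.conj_conj]; ring

lemma mapC_mulVec_star (R : Matrix m m ℝ) (x : m → ℂ) :
    (mapC R).mulVec (star x) = star ((mapC R).mulVec x) := by
  funext i
  simp [mapC, mulVec, dotProduct, map_sum, Complex.conj_ofReal, mul_comm]

lemma dot_star_right (u w : m → ℂ) : u ⬝ᵥ star w = star (star u ⬝ᵥ w) := by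
  simp [dotProduct, map_sum, mul_comm]

lemma form_sum_left {ι : Type*} [Fintype ι] (G : Matrix m m ℂ) (w : ι → m → ℂ) (d : ι → ℂ)
    (x : m → ℂ) :
    star (∑ p, d p • w p) ⬝ᵥ G.mulVec x = ∑ p, (starRingEnd ℂ) (d p) * (star (w p) ⬝ᵥ G.mulVec x) := by
  simp [dotProduct, Complex.star_def, map_sum, Finset.sum_mul, Finset.mul_sum]
  rw [Finset.sum_comm]
  exact Finset.sum_congr rfl fun p _ => Finset.sum_congr rfl fun i _ => by ring

lemma form_sum_right {ι : Type*} [Fintype ι] (G : Matrix m m ℂ) (w : ι → m → ℂ) (d : ι → ℂ)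
    (x : m → ℂ) :
    star x ⬝ᵥ G.mulVec (∑ p, d p • w p) = ∑ p, d p * (star x ⬝ᵥ G.mulVec (w p)) := by
  have h : G.mulVec (∑ p, d p • w p) = ∑ p, d p • G.mulVec (w p) := by
    rw [show G.mulVec (∑ p, d p • w p) = G.mulVecLin (∑ p, d p • w p) from rfl, map_sum]
    simp [mulVecLin]
  rw [h]
  simp [dotProduct, Finset.mul_sum]
  rw [Finset.sum_comm]
  exact Finset.sum_congr rfl fun p _ => Finset.sum_congr rfl fun i _ => by ring

lemma Jmat_mul_Jmat (n : ℕ) : Jmat n * Jmat n = -1 := by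
  simp only [Jmat, Matrix.fromBlocks_multiply]
  ext i j
  rcases i with i | i <;> rcases j with j | j <;>
    simp [Matrix.one_apply, Matrix.neg_apply]

lemma Jmat_transpose (n : ℕ) : (Jmat n)ᵀ = -(Jmat n) := by
  simp [Jmat, Matrix.fromBlocks_transpose, Matrix.fromBlocks_neg]

lemma mapC_mul (M N : Matrix m m ℝ) : mapC (M * N) = mapC M * mapC N := by
  simp only [mapC]
  exact Matrix.map_mul (f := algebraMap ℝ ℂ)

lemma mapC_J_mul_J (n : ℕ) : mapC (Jmat n) * mapC (Jmat n) = -1 := by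
  rw [← mapC_mul, Jmat_mul_Jmat]
  ext i j
  simp [mapC, Matrix.one_apply, Matrix.neg_apply]
  split <;> simp

lemma G_mul_G (n : ℕ) : (Complex.I • mapC (Jmat n)) * (Complex.I • mapC (Jmat n)) = 1 := by
  rw [Matrix.smul_mul, Matrix.mul_smul, mapC_J_mul_J, smul_smul, Complex.I_mul_I]
  simp

lemma mapC_transpose (M : Matrix m m ℝ) : (mapC M)ᵀ = mapC (Mᵀ) := by
  simp [mapC, Matrix.transpose_map]

lemma G_isHermitian (n : ℕ) : (Complex.I • mapC (Jmat n)).IsHermitian := by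
  unfold Matrix.IsHermitian
  ext i j
  have hJ := congrFun (congrFun (Jmat_transpose n) i) j
  simp only [Matrix.transpose_apply, Matrix.neg_apply] at hJ
  simp [Matrix.conjTranspose_apply, mapC, Complex.conj_ofReal, Complex.conj_I, hJ]

lemma conj_form_re (Jr : Matrix m m ℝ) (u : m → ℂ) :
    (star (star u) ⬝ᵥ (Complex.I • mapC Jr).mulVec (star u)).re
      = -((star u ⬝ᵥ (Complex.I • mapC Jr).mulVec u).re) := by
  rw [star_star]
  rw [Matrix.smul_mulVec, dotProduct_smul,
    Matrix.smul_mulVec, dotProduct_smul]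
  rw [mapC_mulVec_star, dot_star_right]
  simp [smul_eq_mul, Complex.mul_re, Complex.I_re, Complex.I_im]

lemma ker_sup_range_of_diag (A P : Matrix m m ℂ) (hP : IsUnit P) (d : m → ℂ)
    (hA : A = P * Matrix.diagonal d * P⁻¹) :
    LinearMap.ker A.mulVecLin ⊔ LinearMap.range A.mulVecLin = ⊤ := by
  have hPdet : IsUnit P.det := (Matrix.isUnit_iff_isUnit_det P).mp hP
  have hinv : P⁻¹ * P = 1 := Matrix.nonsing_inv_mul P hPdet
  have hPc : ∀ z : m → ℂ, P⁻¹.mulVec (P.mulVec z) = z := by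
    intro z; rw [Matrix.mulVec_mulVec, hinv, Matrix.one_mulVec]
  have hAv : ∀ v : m → ℂ, A.mulVec v = P.mulVec ((Matrix.diagonal d).mulVec (P⁻¹.mulVec v)) := by
    intro v; rw [hA, Matrix.mulVec_mulVec, Matrix.mulVec_mulVec]
  have hker2 : ∀ v : m → ℂ, A.mulVec (A.mulVec v) = 0 → A.mulVec v = 0 := by
    intro v hv
    set w := P⁻¹.mulVec v with hw
    have h2 : (Matrix.diagonal d).mulVec ((Matrix.diagonal d).mulVec w) = 0 := by
      have := hv
      rw [hAv (A.mulVec v), hAv v, ← hw, hPc] at this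
      have h0 : P⁻¹.mulVec (P.mulVec ((Matrix.diagonal d).mulVec
          ((Matrix.diagonal d).mulVec w))) = P⁻¹.mulVec 0 := by rw [this]
      rwa [hPc, Matrix.mulVec_zero] at h0
    have h1 : (Matrix.diagonal d).mulVec w = 0 := by
      funext i
      have := congrFun h2 i
      rw [Matrix.mulVec_diagonal, Matrix.mulVec_diagonal] at this
      rw [Matrix.mulVec_diagonal]
      simp only [Pi.zero_apply] at this ⊢
      rcases mul_eq_zero.mp this with h | h
      · rw [h, zero_mul]
      · exact h
    rw [hAv v, ← hw, h1, Matrix.mulVec_zero]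
  have hdisj : LinearMap.ker A.mulVecLin ⊓ LinearMap.range A.mulVecLin = ⊥ := by
    rw [eq_bot_iff]
    rintro x ⟨hk, v, rfl⟩
    exact hker2 v (by simpa using hk)
  have hfin := LinearMap.finrank_range_add_finrank_ker A.mulVecLin
  have hsum := Submodule.finrank_sup_add_finrank_inf_eq (LinearMap.ker A.mulVecLin)
    (LinearMap.range A.mulVecLin)
  rw [hdisj] at hsum
  simp only [finrank_bot, add_zero] at hsum
  apply Submodule.eq_top_of_finrank_eq
  rw [hsum, add_comm, hfin]

def conjSubmodule (U : Submodule ℂ (m → ℂ)) : Submodule ℂ (m → ℂ) where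
  carrier := star '' U
  add_mem' := by
    rintro a b ⟨u, hu, rfl⟩ ⟨v, hv, rfl⟩
    exact ⟨u + v, U.add_mem hu hv, by simp⟩
  zero_mem' := ⟨0, U.zero_mem, star_zero _⟩
  smul_mem' := by
    rintro c x ⟨u, hu, rfl⟩
    exact ⟨star c • u, U.smul_mem _ hu, by rw [star_smul, star_star]⟩

lemma mem_conjSubmodule {U : Submodule ℂ (m → ℂ)} {x : m → ℂ} :
    x ∈ conjSubmodule U ↔ star x ∈ U := by
  constructor
  · rintro ⟨u, hu, rfl⟩; simpa using hu
  · intro h; exact ⟨star x, h, by simp⟩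

def conjE : (m → ℂ) ≃ₗ[ℝ] (m → ℂ) :=
  LinearEquiv.piCongrRight fun _ => Complex.conjLIE.toLinearEquiv

lemma conjE_apply (x : m → ℂ) : (conjE x) = star x := rfl

lemma finrank_conjSubmodule (U : Submodule ℂ (m → ℂ)) :
    Module.finrank ℂ (conjSubmodule U) = Module.finrank ℂ U := by
  have hmap : (Submodule.map (conjE.toLinearMap) (U.restrictScalars ℝ)) =
      ((conjSubmodule U).restrictScalars ℝ) := by
    ext x
    simp only [Submodule.mem_map, Submodule.restrictScalars_mem, mem_conjSubmodule]
    constructor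
    · rintro ⟨u, hu, rfl⟩; simpa [conjE_apply] using hu
    · intro h; exact ⟨star x, h, by simp [conjE_apply]⟩
  have h1 : Module.finrank ℝ (U.restrictScalars ℝ)
      = Module.finrank ℝ ((conjSubmodule U).restrictScalars ℝ) := by
    rw [← hmap]
    exact (LinearEquiv.finrank_map_eq conjE (U.restrictScalars ℝ)).symm
  have h2 : Module.finrank ℝ (U.restrictScalars ℝ) = Module.finrank ℝ U :=
    LinearEquiv.finrank_eq ((Submodule.restrictScalarsEquiv ℝ ℂ (m → ℂ) U).restrictScalars ℝ)
  have h3 : Module.finrank ℝ ((conjSubmodule U).restrictScalars ℝ)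
      = Module.finrank ℝ (conjSubmodule U) :=
    LinearEquiv.finrank_eq
      ((Submodule.restrictScalarsEquiv ℝ ℂ (m → ℂ) (conjSubmodule U)).restrictScalars ℝ)
  have h4 : Module.finrank ℝ ℂ * Module.finrank ℂ U = Module.finrank ℝ U :=
    Module.finrank_mul_finrank ℝ ℂ U
  have h5 : Module.finrank ℝ ℂ * Module.finrank ℂ (conjSubmodule U)
      = Module.finrank ℝ (conjSubmodule U) :=
    Module.finrank_mul_finrank ℝ ℂ (conjSubmodule U)
  have h6 : Module.finrank ℝ ℂ = 2 := Complex.finrank_real_complex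
  rw [h6] at h4 h5
  omega

theorem exists_maximal_definite (G : Matrix m m ℂ) (hG : G.IsHermitian) (V : Submodule ℂ (m → ℂ))
    (hnd : ∀ x ∈ V, (∀ y ∈ V, star x ⬝ᵥ G.mulVec y = 0) → x = 0) :
    ∃ p q : ℕ, p + q = Module.finrank ℂ V ∧
      (∃ U : Submodule ℂ (m → ℂ), U ≤ V ∧ Module.finrank ℂ U = p ∧
        ∀ x ∈ U, x ≠ 0 → 0 < (star x ⬝ᵥ G.mulVec x).re) ∧
      (∃ U : Submodule ℂ (m → ℂ), U ≤ V ∧ Module.finrank ℂ U = q ∧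
        ∀ x ∈ U, x ≠ 0 → (star x ⬝ᵥ G.mulVec x).re < 0) := by
  classical
  set k := Module.finrank ℂ V with hk
  let bV : Module.Basis (Fin k) ℂ V := Module.finBasis ℂ V
  set v : Fin k → (m → ℂ) := fun j => (bV j : m → ℂ) with hv
  have hvV : ∀ j, v j ∈ V := fun j => (bV j).2
  have hvli : LinearIndependent ℂ v := bV.linearIndependent.map' V.subtype V.ker_subtype
  have hvspan : ∀ x ∈ V, ∃ c : Fin k → ℂ, x = ∑ j, c j • v j := by
    intro x hx
    refine ⟨fun j => bV.repr ⟨x, hx⟩ j, ?_⟩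
    have h1 : (⟨x, hx⟩ : V) = ∑ j, bV.repr ⟨x, hx⟩ j • bV j := (bV.sum_repr ⟨x, hx⟩).symm
    have h2 := congrArg (V.subtype) h1
    have h3 : x = V.subtype (∑ j, bV.repr ⟨x, hx⟩ j • bV j) := h2
    refine h3.trans ?_
    rw [map_sum]; rfl
  set M : Matrix (Fin k) (Fin k) ℂ := Matrix.of fun p q => star (v p) ⬝ᵥ G.mulVec (v q) with hMdef
  have hM : M.IsHermitian := by
    ext p q
    simpa [hMdef, Matrix.conjTranspose_apply] using herm_conj G hG (v q) (v p)
  have hMker : ∀ c : Fin k → ℂ, M.mulVec c = 0 → c = 0 := by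
    intro c hc
    set x := ∑ q, c q • v q with hx
    have hxV : x ∈ V := Submodule.sum_mem V (fun q _ => V.smul_mem _ (hvV q))
    have hform : ∀ p, star (v p) ⬝ᵥ G.mulVec x = 0 := by
      intro p
      rw [hx, form_sum_right]
      have := congrFun hc p
      simpa [Matrix.mulVec, dotProduct, hMdef, mul_comm] using this
    have hx0 : x = 0 := by
      apply hnd x hxV
      intro y hy
      obtain ⟨d, rfl⟩ := hvspan y hy
      have hzero : ∀ p, star x ⬝ᵥ G.mulVec (v p) = 0 := fun p => by
        rw [← herm_conj G hG (v p) x, hform p, star_zero]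
      rw [form_sum_right]
      simp only [hzero, mul_zero, Finset.sum_const_zero]
    have := Fintype.linearIndependent_iff.mp hvli c (by rw [← hx, hx0])
    funext j; exact this j
  have hMeig : ∀ j, hM.eigenvalues j ≠ 0 := by
    intro j hj
    have h1 := hM.mulVec_eigenvectorBasis j
    rw [hj] at h1
    simp only [zero_smul] at h1
    have h2 := hMker _ h1
    have h3 := hM.eigenvectorBasis.orthonormal.1 j
    have h4 : hM.eigenvectorBasis j = 0 := by
      apply (WithLp.equiv 2 (Fin k → ℂ)).injective
      simpa using h2
    rw [h4] at h3
    simp at h3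
  set U : Matrix (Fin k) (Fin k) ℂ := (hM.eigenvectorUnitary : Matrix (Fin k) (Fin k) ℂ) with hU
  have hdiag : star U * M * U = Matrix.diagonal (RCLike.ofReal ∘ hM.eigenvalues) :=
    by have h := hM.conjStarAlgAut_star_eigenvectorUnitary; rwa [Unitary.conjStarAlgAut_star_apply] at h
  have hUinv : star U * U = 1 := by
    have := hM.eigenvectorUnitary.2
    rw [Matrix.mem_unitaryGroup_iff'] at this
    exact this
  set lam := hM.eigenvalues with hlam
  set w : Fin k → (m → ℂ) := fun j => ∑ i, U i j • v i with hw
  have hwV : ∀ j, w j ∈ V := fun j => Submodule.sum_mem V (fun i _ => V.smul_mem _ (hvV i))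
  have hwli : LinearIndependent ℂ w := by
    rw [Fintype.linearIndependent_iff]
    intro g hg
    have hsum : ∑ j, g j • w j = ∑ i, (U.mulVec g) i • v i := by
      simp only [hw, Finset.smul_sum, Matrix.mulVec, dotProduct, Finset.sum_smul, smul_smul]
      rw [Finset.sum_comm]
      exact Finset.sum_congr rfl fun i _ => Finset.sum_congr rfl fun j _ => by rw [mul_comm]
    rw [hsum] at hg
    have hUg : U.mulVec g = 0 := by
      funext i
      exact Fintype.linearIndependent_iff.mp hvli _ hg i
    have : (star U).mulVec (U.mulVec g) = 0 := by rw [hUg, Matrix.mulVec_zero]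
    rw [Matrix.mulVec_mulVec, hUinv, Matrix.one_mulVec] at this
    intro i; exact congrFun this i
  have hGram : ∀ p q, star (w p) ⬝ᵥ G.mulVec (w q) = if p = q then (lam p : ℂ) else 0 := by
    intro p q
    have h1 : star (w p) ⬝ᵥ G.mulVec (w q) = ∑ i, (starRingEnd ℂ) (U i p) * ∑ j, U j q * M i j := by
      rw [hw, form_sum_left]
      refine Finset.sum_congr rfl fun i _ => ?_
      rw [form_sum_right]
      simp [hMdef]
    have h2 : (star U * M * U) p q = ∑ i, (starRingEnd ℂ) (U i p) * ∑ j, U j q * M i j := by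
      simp only [Matrix.mul_apply, Matrix.star_apply, RCLike.star_def, Finset.sum_mul,
        Finset.mul_sum]
      rw [Finset.sum_comm]
      exact Finset.sum_congr rfl fun i _ => Finset.sum_congr rfl fun j _ => by ring
    rw [h1, ← h2, hdiag]
    by_cases h : p = q <;> simp [Matrix.diagonal_apply, h]
  -- positive and negative index sets
  set P : Finset (Fin k) := Finset.univ.filter (fun j => 0 < lam j) with hP
  set N : Finset (Fin k) := Finset.univ.filter (fun j => lam j < 0) with hN
  have hPN : P.card + N.card = k := by
    have : N = Finset.univ.filter (fun j => ¬ 0 < lam j) := by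
      refine Finset.filter_congr fun j _ => ?_
      constructor
      · intro h; exact not_lt.mpr (le_of_lt h)
      · intro h; rcases lt_or_gt_of_ne (hMeig j) with h' | h'
        · exact h'
        · exact absurd h' h
    rw [this, Finset.card_filter_add_card_filter_not, Finset.card_univ, Fintype.card_fin]
  have main : ∀ S : Finset (Fin k),
      ∃ Us : Submodule ℂ (m → ℂ), Us ≤ V ∧ Module.finrank ℂ Us = S.card ∧
        ∀ x ∈ Us, x ≠ 0 → ∃ c : {j : Fin k // j ∈ S} → ℂ, (∃ p, c p ≠ 0) ∧
          (star x ⬝ᵥ G.mulVec x).re = ∑ p, Complex.normSq (c p) * lam ↑p := by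
    intro S
    set f : {j : Fin k // j ∈ S} → (m → ℂ) := fun p => w ↑p with hf
    have hfli : LinearIndependent ℂ f := hwli.comp _ Subtype.val_injective
    have hGram' : ∀ p q : {j : Fin k // j ∈ S},
        star (f p) ⬝ᵥ G.mulVec (f q) = if p = q then (lam ↑p : ℂ) else 0 := by
      intro p q
      simp only [hf]
      rw [hGram ↑p ↑q]
      by_cases h : p = q
      · simp [h]
      · rw [if_neg h, if_neg (fun hh => h (Subtype.ext hh))]
    refine ⟨Submodule.span ℂ (Set.range f), ?_, ?_, ?_⟩
    · rw [Submodule.span_le]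
      rintro _ ⟨p, rfl⟩
      exact hwV _
    · rw [finrank_span_eq_card hfli]
      simp
    · intro x hx hx0
      obtain ⟨c, hc⟩ := (Submodule.mem_span_range_iff_exists_fun ℂ).mp hx
      refine ⟨c, ?_, ?_⟩
      · by_contra hall
        push_neg at hall
        apply hx0
        rw [← hc]
        simp [hall]
      · have hone : ∀ p : {j : Fin k // j ∈ S},
            star (f p) ⬝ᵥ G.mulVec (∑ q, c q • f q) = c p * (lam ↑p : ℂ) := by
          intro p
          rw [form_sum_right]
          simp only [hGram']
          simp [mul_ite, Finset.sum_ite_eq]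
        rw [← hc, form_sum_left]
        simp only [hone]
        rw [Complex.re_sum]
        refine Finset.sum_congr rfl fun p _ => ?_
        rw [← mul_assoc, mul_comm ((starRingEnd ℂ) (c p)) (c p), Complex.mul_conj]
        simp [Complex.re_ofReal_mul]
  refine ⟨P.card, N.card, hPN, ?_, ?_⟩
  · obtain ⟨Us, h1, h2, h3⟩ := main P
    refine ⟨Us, h1, h2, fun x hx hx0 => ?_⟩
    obtain ⟨c, ⟨p0, hp0⟩, hre⟩ := h3 x hx hx0
    rw [hre]
    refine Finset.sum_pos' (fun p _ => ?_) ⟨p0, Finset.mem_univ _, ?_⟩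
    · have hlp : 0 < lam ↑p := (Finset.mem_filter.mp p.2).2
      exact mul_nonneg (Complex.normSq_nonneg _) (le_of_lt hlp)
    · have hlp : 0 < lam ↑p0 := (Finset.mem_filter.mp p0.2).2
      exact mul_pos (Complex.normSq_pos.mpr hp0) hlp
  · obtain ⟨Us, h1, h2, h3⟩ := main N
    refine ⟨Us, h1, h2, fun x hx hx0 => ?_⟩
    obtain ⟨c, ⟨p0, hp0⟩, hre⟩ := h3 x hx hx0
    rw [hre]
    have hpos : 0 < ∑ p : {j : Fin k // j ∈ N}, Complex.normSq (c p) * (-lam ↑p) := by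
      refine Finset.sum_pos' (fun p _ => ?_) ⟨p0, Finset.mem_univ _, ?_⟩
      · have hlp : lam ↑p < 0 := (Finset.mem_filter.mp p.2).2
        exact mul_nonneg (Complex.normSq_nonneg _) (by linarith)
      · have hlp : lam ↑p0 < 0 := (Finset.mem_filter.mp p0.2).2
        exact mul_pos (Complex.normSq_pos.mpr hp0) (by linarith)
    have heq : ∑ p : {j : Fin k // j ∈ N}, Complex.normSq (c p) * (-lam ↑p)
        = -∑ p : {j : Fin k // j ∈ N}, Complex.normSq (c p) * lam ↑p := by
      rw [← Finset.sum_neg_distrib]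
      exact Finset.sum_congr rfl fun p _ => by ring
    rw [heq] at hpos
    linarith

end Helpers

/-- If `J·B` is diagonalizable over `ℂ`, then the Hermitian form of `G = i·J`
restricted to `V = ker B ⊆ ℂ^{2n}` is nondegenerate and has signature zero. -/
theorem stmt_13 (n : ℕ) (hn : 0 < n)
    (B : Matrix (Fin n ⊕ Fin n) (Fin n ⊕ Fin n) ℝ) (hB : B.IsSymm)
    (hss : semisimpleC (Jmat n * B)) :
    (∀ x ∈ LinearMap.ker (mapC B).mulVecLin,
      (∀ y ∈ LinearMap.ker (mapC B).mulVecLin,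
        star x ⬝ᵥ (Complex.I • mapC (Jmat n)).mulVec y = 0) → x = 0) ∧
    posIndexOn (Complex.I • mapC (Jmat n)) (LinearMap.ker (mapC B).mulVecLin) =
      negIndexOn (Complex.I • mapC (Jmat n)) (LinearMap.ker (mapC B).mulVecLin) ∧
    posIndexOn (Complex.I • mapC (Jmat n)) (LinearMap.ker (mapC B).mulVecLin) +
      negIndexOn (Complex.I • mapC (Jmat n)) (LinearMap.ker (mapC B).mulVecLin) =
      Module.finrank ℂ (LinearMap.ker (mapC B).mulVecLin) := by
  classical
  obtain ⟨Pm, hPm, dm, hdm⟩ := hss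
  set G := Complex.I • mapC (Jmat n) with hGdef
  set K := LinearMap.ker (mapC B).mulVecLin with hKdef
  have hGherm : G.IsHermitian := G_isHermitian n
  have hGG : G * G = 1 := G_mul_G n
  have hBT : (mapC B)ᵀ = mapC B := by rw [mapC_transpose, hB.eq]
  have hmemK : ∀ x, x ∈ K ↔ (mapC B).mulVec x = 0 := by
    intro x; rw [hKdef, LinearMap.mem_ker, Matrix.mulVecLin_apply]
  -- kernel of J*B equals kernel of B
  have hker_eq : LinearMap.ker (mapC (Jmat n * B)).mulVecLin = K := by
    ext x
    rw [LinearMap.mem_ker, Matrix.mulVecLin_apply, hmemK, mapC_mul, ← Matrix.mulVec_mulVec]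
    constructor
    · intro h
      have h2 : mapC (Jmat n) *ᵥ (mapC (Jmat n) *ᵥ ((mapC B) *ᵥ x)) = 0 := by
        rw [h, Matrix.mulVec_zero]
      rw [Matrix.mulVec_mulVec, mapC_J_mul_J, Matrix.neg_mulVec, Matrix.one_mulVec] at h2
      simpa using h2
    · intro h; rw [h, Matrix.mulVec_zero]
  have hsup : K ⊔ LinearMap.range (mapC (Jmat n * B)).mulVecLin = ⊤ := by
    rw [← hker_eq]
    exact ker_sup_range_of_diag _ Pm hPm dm hdm
  -- nondegeneracy
  have hnd : ∀ x ∈ K, (∀ y ∈ K, star x ⬝ᵥ G.mulVec y = 0) → x = 0 := by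
    intro x hx hortho
    have hBx : (mapC B).mulVec x = 0 := (hmemK x).mp hx
    have hall : ∀ y, star x ⬝ᵥ G.mulVec y = 0 := by
      intro y
      have hy : y ∈ K ⊔ LinearMap.range (mapC (Jmat n * B)).mulVecLin := by
        rw [hsup]; trivial
      obtain ⟨u, hu, r, hr, rfl⟩ := Submodule.mem_sup.mp hy
      rw [Matrix.mulVec_add, dotProduct_add, hortho u hu, zero_add]
      obtain ⟨z, rfl⟩ := hr
      rw [Matrix.mulVecLin_apply, mapC_mul, ← Matrix.mulVec_mulVec]
      have hGJ : G *ᵥ (mapC (Jmat n) *ᵥ ((mapC B) *ᵥ z))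
          = Complex.I • -((mapC B) *ᵥ z) := by
        rw [hGdef, Matrix.smul_mulVec, Matrix.mulVec_mulVec, mapC_J_mul_J,
          Matrix.neg_mulVec, Matrix.one_mulVec]
      rw [hGJ, dotProduct_smul]
      have hrow : star x ⬝ᵥ ((mapC B) *ᵥ z) = 0 := by
        rw [Matrix.dotProduct_mulVec]
        have hv : star x ᵥ* (mapC B) = 0 := by
          rw [← Matrix.mulVec_transpose, hBT, mapC_mulVec_star, hBx, star_zero]
        rw [hv, zero_dotProduct]
      rw [dotProduct_neg, hrow]
      simp
    have hrow : star x ᵥ* G = 0 := by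
      funext i
      have h := hall (Pi.single i 1)
      rw [Matrix.dotProduct_mulVec] at h
      simpa using h
    have hsx : star x = 0 := by
      have h2 : (star x ᵥ* G) ᵥ* G = star x := by
        rw [Matrix.vecMul_vecMul, hGG, Matrix.vecMul_one]
      rw [hrow, Matrix.zero_vecMul] at h2
      exact h2.symm
    have := congrArg star hsx
    simpa using this
  -- conjugation stability of K
  have hKstar : ∀ x ∈ K, star x ∈ K := by
    intro x hx
    rw [hmemK] at hx ⊢
    rw [mapC_mulVec_star, hx, star_zero]
  -- index sets
  refine ⟨hnd, ?_⟩
  obtain ⟨p, q, hpq, ⟨Up, hUpK, hUpr, hUppos⟩, ⟨Uq, hUqK, hUqr, hUqneg⟩⟩ :=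
    exists_maximal_definite G hGherm K hnd
  set Spos : Set ℕ := {kk : ℕ | ∃ U : Submodule ℂ ((Fin n ⊕ Fin n) → ℂ), U ≤ K ∧
    Module.finrank ℂ U = kk ∧ ∀ x ∈ U, x ≠ 0 → 0 < (star x ⬝ᵥ G.mulVec x).re} with hSposDef
  set Sneg : Set ℕ := {kk : ℕ | ∃ U : Submodule ℂ ((Fin n ⊕ Fin n) → ℂ), U ≤ K ∧
    Module.finrank ℂ U = kk ∧ ∀ x ∈ U, x ≠ 0 → (star x ⬝ᵥ G.mulVec x).re < 0} with hSnegDef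
  have hposIdx : posIndexOn G K = sSup Spos := rfl
  have hnegIdx : negIndexOn G K = sSup Sneg := rfl
  have hbpos : BddAbove Spos := by
    refine ⟨Module.finrank ℂ K, ?_⟩
    rintro kk ⟨U, hUK, hUr, -⟩
    exact hUr ▸ Submodule.finrank_mono hUK
  have hbneg : BddAbove Sneg := by
    refine ⟨Module.finrank ℂ K, ?_⟩
    rintro kk ⟨U, hUK, hUr, -⟩
    exact hUr ▸ Submodule.finrank_mono hUK
  have hnepos : (0 : ℕ) ∈ Spos :=
    ⟨⊥, bot_le, finrank_bot ℂ _, fun x hx hx0 => absurd ((Submodule.mem_bot ℂ).mp hx) hx0⟩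
  have hneneg : (0 : ℕ) ∈ Sneg :=
    ⟨⊥, bot_le, finrank_bot ℂ _, fun x hx hx0 => absurd ((Submodule.mem_bot ℂ).mp hx) hx0⟩
  -- conjugation exchanges the two sets
  have hflipmem : ∀ kk, kk ∈ Spos → kk ∈ Sneg := by
    rintro kk ⟨U, hUK, hUr, hUpos⟩
    refine ⟨conjSubmodule U, ?_, ?_, ?_⟩
    · intro x hx
      have hsxU : star x ∈ U := mem_conjSubmodule.mp hx
      have := hKstar (star x) (hUK hsxU)
      simpa using this
    · rw [finrank_conjSubmodule]; exact hUr
    · intro x hx hx0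
      have hsxU : star x ∈ U := mem_conjSubmodule.mp hx
      have hsx0 : star x ≠ 0 := fun h => hx0 (by simpa using congrArg star h)
      have hval := hUpos (star x) hsxU hsx0
      have hflip := conj_form_re (Jmat n) (star x)
      rw [← hGdef] at hflip
      simp only [star_star] at hflip hval
      rw [hflip]
      linarith
  have hflipmem' : ∀ kk, kk ∈ Sneg → kk ∈ Spos := by
    rintro kk ⟨U, hUK, hUr, hUneg⟩
    refine ⟨conjSubmodule U, ?_, ?_, ?_⟩
    · intro x hx
      have hsxU : star x ∈ U := mem_conjSubmodule.mp hx
      have := hKstar (star x) (hUK hsxU)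
      simpa using this
    · rw [finrank_conjSubmodule]; exact hUr
    · intro x hx hx0
      have hsxU : star x ∈ U := mem_conjSubmodule.mp hx
      have hsx0 : star x ≠ 0 := fun h => hx0 (by simpa using congrArg star h)
      have hval := hUneg (star x) hsxU hsx0
      have hflip := conj_form_re (Jmat n) (star x)
      rw [← hGdef] at hflip
      simp only [star_star] at hflip hval
      rw [hflip]
      linarith
  have hsets : Spos = Sneg := Set.eq_of_subset_of_subset hflipmem hflipmem'
  have hmempos : p ∈ Spos := ⟨Up, hUpK, hUpr, hUppos⟩
  have hmemneg : q ∈ Sneg := ⟨Uq, hUqK, hUqr, hUqneg⟩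
  have hple : p ≤ sSup Spos := le_csSup hbpos hmempos
  have hqle : q ≤ sSup Sneg := le_csSup hbneg hmemneg
  have hmaxpos : sSup Spos ∈ Spos := Nat.sSup_mem ⟨0, hnepos⟩ hbpos
  have hmaxneg : sSup Sneg ∈ Sneg := Nat.sSup_mem ⟨0, hneneg⟩ hbneg
  obtain ⟨Uplus, hUplusK, hUplusr, hUpluspos⟩ := hmaxpos
  obtain ⟨Uminus, hUminusK, hUminusr, hUminusneg⟩ := hmaxneg
  have hdisj : Uplus ⊓ Uminus = ⊥ := by
    rw [eq_bot_iff]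
    intro x hx
    rw [Submodule.mem_bot]
    by_contra hx0
    have h1 := hUpluspos x (Submodule.mem_inf.mp hx).1 hx0
    have h2 := hUminusneg x (Submodule.mem_inf.mp hx).2 hx0
    linarith
  have hsum := Submodule.finrank_sup_add_finrank_inf_eq Uplus Uminus
  rw [hdisj] at hsum
  simp only [finrank_bot, add_zero] at hsum
  have hsuple : Uplus ⊔ Uminus ≤ K := sup_le hUplusK hUminusK
  have hub : sSup Spos + sSup Sneg ≤ Module.finrank ℂ K := by
    rw [← hUplusr, ← hUminusr, ← hsum]
    exact Submodule.finrank_mono hsuple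
  have hlb : Module.finrank ℂ K ≤ sSup Spos + sSup Sneg := by
    rw [← hpq]
    exact Nat.add_le_add hple hqle
  constructor
  · rw [hposIdx, hnegIdx, hsets]
  · rw [hposIdx, hnegIdx]
    omega
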